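/- Let Γ be a connected locally finite graph and G ≤ Aut(Γ) with an infinite point stabiliser. If every nontrivial normal subgroup of G has only finitely many orbits on VΓ, then the quasi-centre of every normal subgroup N ⊴ G is trivial. -/

import Mathlib

/-- The automorphism group of a simple graph `Γ`, as a subgroup of `Sym(V)`. -/
def autSub {V : Type*} (Γ : SimpleGraph V) : Subgroup (Equiv.Perm V) where
  carrier := {g | ∀ a b : V, Γ.Adj (g a) (g b) ↔ Γ.Adj a b}
  one_mem' := by intro a b; simp
  mul_mem' := by
    intro x y hx hy a b
    simpa [Equiv.Perm.mul_apply] using (hx (y a) (y b)).trans (hy a b)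
  inv_mem' := by
    intro g hg a b
    rw [← hg (g⁻¹ a) (g⁻¹ b)]
    simp


/-- The quasi-centre of `N ≤ Sym(V)`: the set of `n ∈ N` centralised by the pointwise
stabiliser in `N` of some finite set of points. -/
def QZset {V : Type*} (N : Subgroup (Equiv.Perm V)) : Set (Equiv.Perm V) :=
  {g | g ∈ N ∧ ∃ Φ : Finset V, ∀ h ∈ N, (∀ x ∈ Φ, h x = x) → h * g = g * h}

section Aux

open SimpleGraph

variable {V : Type*} {Γ : SimpleGraph V}

lemma mem_autSub_iff {g : Equiv.Perm V} :
    g ∈ autSub Γ ↔ ∀ a b : V, Γ.Adj (g a) (g b) ↔ Γ.Adj a b := Iff.rfl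

/-- Graph automorphisms preserve the graph distance. -/
lemma autSub_dist (hconn : Γ.Connected) {g : Equiv.Perm V} (hg : g ∈ autSub Γ) (a b : V) :
    Γ.dist (g a) (g b) = Γ.dist a b := by
  have key : ∀ h : Equiv.Perm V, h ∈ autSub Γ → ∀ a b : V,
      Γ.dist (h a) (h b) ≤ Γ.dist a b := by
    intro h hh a b
    obtain ⟨p, hp⟩ := (hconn.preconnected a b).exists_walk_length_eq_dist
    let f : Γ →g Γ := ⟨(h : V → V), fun hxy => (mem_autSub_iff.mp hh _ _).mpr hxy⟩
    calc Γ.dist (h a) (h b) ≤ (p.map f).length := SimpleGraph.dist_le _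
      _ = p.length := SimpleGraph.Walk.length_map _ _
      _ = Γ.dist a b := hp
  refine le_antisymm (key g hg a b) ?_
  have h2 := key g⁻¹ ((autSub Γ).inv_mem hg) (g a) (g b)
  simpa using h2

lemma dist_getVert_le (hconn : Γ.Connected) {u v : V} (p : Γ.Walk u v) (i : ℕ) :
    Γ.dist u (p.getVert i) ≤ i := by
  induction p generalizing i with
  | @nil u =>
    have h : (SimpleGraph.Walk.nil : Γ.Walk u u).getVert i = u :=
      SimpleGraph.Walk.getVert_of_length_le _ (by simp)
    simp [h, SimpleGraph.dist_self]
  | @cons u w v hadj q ih =>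
    cases i with
    | zero => simp
    | succ i =>
      have hgv : (q.cons hadj).getVert (i + 1) = q.getVert i := rfl
      rw [hgv]
      calc Γ.dist u (q.getVert i) ≤ Γ.dist u w + Γ.dist w (q.getVert i) :=
            hconn.dist_triangle
        _ ≤ 1 + i := add_le_add (by simpa using SimpleGraph.dist_le hadj.toWalk) (ih i)
        _ = i + 1 := by omega

lemma dist_getVert_right (hconn : Γ.Connected) {u v : V} (p : Γ.Walk u v) {i : ℕ}
    (hi : i ≤ p.length) : Γ.dist (p.getVert i) v ≤ p.length - i := by
  have h1 : p.reverse.getVert (p.length - i) = p.getVert i := by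
    rw [SimpleGraph.Walk.getVert_reverse]
    congr 1
    omega
  rw [SimpleGraph.dist_comm, ← h1]
  exact dist_getVert_le hconn p.reverse (p.length - i)

/-- Balls in a connected locally finite graph are finite. -/
lemma ball_finite (hconn : Γ.Connected) (hlf : ∀ v : V, (Γ.neighborSet v).Finite) (o : V) :
    ∀ r : ℕ, {v : V | Γ.dist o v ≤ r}.Finite := by
  intro r
  induction r with
  | zero =>
    refine Set.Finite.subset (Set.finite_singleton o) ?_
    intro v hv
    have : Γ.dist o v = 0 := Nat.le_zero.mp hv
    simp [(hconn.dist_eq_zero_iff.mp this).symm]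
  | succ r ih =>
    refine Set.Finite.subset (ih.union (Set.Finite.biUnion ih (fun y _ => hlf y))) ?_
    intro v hv
    rcases Nat.lt_or_ge (Γ.dist o v) (r + 1) with h | h
    · exact Or.inl (Nat.lt_succ_iff.mp h)
    · have hd : Γ.dist o v = r + 1 := le_antisymm hv h
      obtain ⟨p, hp⟩ := (hconn.preconnected o v).exists_walk_length_eq_dist
      right
      have hyd : Γ.dist o (p.getVert r) ≤ r := dist_getVert_le hconn p r
      have hadj : Γ.Adj (p.getVert r) v := by
        have h1 : r < p.length := by omega
        have h2 := SimpleGraph.Walk.adj_getVert_succ p h1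
        have h3 : p.getVert (r + 1) = v :=
          SimpleGraph.Walk.getVert_of_length_le p (by omega)
        rwa [h3] at h2
      exact Set.mem_biUnion hyd hadj

/-- From an infinite point stabiliser one gets nontrivial elements of `G` fixing any
prescribed finite set of vertices. -/
lemma fixator_ne_one (hconn : Γ.Connected) (hlf : ∀ v : V, (Γ.neighborSet v).Finite)
    (G : Subgroup (Equiv.Perm V)) (hG : G ≤ autSub Γ)
    (hstab : ∃ v : V, {g : Equiv.Perm V | g ∈ G ∧ g v = v}.Infinite) :
    ∀ Φ : Finset V, ∃ u ∈ G, u ≠ 1 ∧ ∀ x ∈ Φ, u x = x := by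
  intro Φ
  obtain ⟨v₀, hinf⟩ := hstab
  set ρ := Φ.sup (fun x => Γ.dist v₀ x) with hρ
  have hball := ball_finite hconn hlf v₀ ρ
  set B : Finset V := hball.toFinset with hB
  have hmemB : ∀ x : V, x ∈ B ↔ Γ.dist v₀ x ≤ ρ := by
    intro x; simp [hB, Set.Finite.mem_toFinset]
  -- map each stabiliser element to its restriction to the ball
  have hmaps : Set.MapsTo (fun (g : Equiv.Perm V) => fun (x : B) => g (x : V))
      {g : Equiv.Perm V | g ∈ G ∧ g v₀ = v₀}
      (Set.univ.pi (fun _ : B => (B : Set V))) := by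
    intro g hg
    intro x _
    have hgaut : g ∈ autSub Γ := hG hg.1
    have : Γ.dist v₀ (g (x : V)) = Γ.dist v₀ (x : V) := by
      conv_lhs => rw [← hg.2]
      exact autSub_dist hconn hgaut v₀ x
    have hx : Γ.dist v₀ (x : V) ≤ ρ := (hmemB _).mp x.2
    have : Γ.dist v₀ (g (x : V)) ≤ ρ := by rw [this]; exact hx
    simpa using (hmemB _).mpr this
  have hfin : (Set.univ.pi (fun _ : B => (B : Set V))).Finite :=
    Set.Finite.pi (fun _ => B.finite_toSet)
  obtain ⟨g₁, hg₁, g₂, hg₂, hne, heq⟩ := hinf.exists_ne_map_eq_of_mapsTo hmaps hfin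
  refine ⟨g₁⁻¹ * g₂, G.mul_mem (G.inv_mem hg₁.1) hg₂.1, ?_, ?_⟩
  · intro h
    exact hne (inv_mul_eq_one.mp h)
  · intro x hx
    have hxB : x ∈ B := (hmemB x).mpr (Finset.le_sup (f := fun x => Γ.dist v₀ x) hx)
    have := congrFun heq ⟨x, hxB⟩
    simp only at this
    rw [Equiv.Perm.mul_apply, ← this]
    exact Equiv.symm_apply_apply g₁ x

/-- The key lemma: if `M ≤ G` has finitely many orbits, every element of `M` is
centralised by the fixator (in `H`) of some finite set, `H` is normalised by `G`, and `H`
contains nontrivial elements fixing any finite set, then we get a contradiction. -/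
lemma lemmaX (hconn : Γ.Connected) (hlf : ∀ v : V, (Γ.neighborSet v).Finite)
    (G H M : Subgroup (Equiv.Perm V)) (hG : G ≤ autSub Γ)
    (hH : ∀ g ∈ G, ∀ h ∈ H, g * h * g⁻¹ ∈ H) (hMG : M ≤ G)
    (S : Finset V) (hS : ∀ v : V, ∃ s ∈ S, ∃ m ∈ M, m s = v)
    (hQZ : ∀ m ∈ M, ∃ Φ : Finset V, ∀ h ∈ H, (∀ x ∈ Φ, h x = x) → h * m = m * h)
    (hfix : ∀ Φ : Finset V, ∃ h ∈ H, h ≠ 1 ∧ ∀ x ∈ Φ, h x = x) : False := by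
  classical
  -- a base vertex
  obtain ⟨h₀, _, hh₀ne, _⟩ := hfix ∅
  obtain ⟨o, -⟩ : ∃ x : V, h₀ x ≠ x := by
    by_contra hcon
    push_neg at hcon
    exact hh₀ne (Equiv.ext fun x => by simpa using hcon x)
  -- distance-preservation for elements of M
  have hdistM : ∀ m ∈ M, ∀ a b : V, Γ.dist (m a) (m b) = Γ.dist a b :=
    fun m hm a b => autSub_dist hconn (hG (hMG hm)) a b
  set D₁ := S.sup (fun s => Γ.dist o s) with hD₁
  set D := 2 * D₁ + 1 with hD
  -- orbit representatives choice: for each w in the D-ball, a fixed element of M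
  -- taking o to w (if one exists)
  have hchoice : ∀ w : V, ∃ tw : Equiv.Perm V, tw ∈ M ∧
      ((∃ m ∈ M, m o = w) → tw o = w) := by
    intro w
    by_cases h : ∃ m ∈ M, m o = w
    · obtain ⟨m, hm, hmo⟩ := h
      exact ⟨m, hm, fun _ => hmo⟩
    · exact ⟨1, M.one_mem, fun hc => absurd hc h⟩
  choose t htM hto using hchoice
  have hΦex : ∀ w : V, ∃ Φ : Finset V, ∀ h ∈ H, (∀ x ∈ Φ, h x = x) → h * t w = t w * h :=
    fun w => hQZ (t w) (htM w)
  choose Φt hΦt using hΦex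
  set Bd : Finset V := (ball_finite hconn hlf o D).toFinset with hBd
  have hmemBd : ∀ x : V, x ∈ Bd ↔ Γ.dist o x ≤ D := by
    intro x; simp [hBd, Set.Finite.mem_toFinset]
  set r₁ := max D₁ (Bd.sup (fun w => (Φt w).sup (fun x => Γ.dist o x))) with hr₁
  -- the fixator of the r₁-ball in H, and its fixed-point set
  set L : Set (Equiv.Perm V) :=
    {h | h ∈ H ∧ ∀ x : V, Γ.dist o x ≤ r₁ → h x = x} with hL
  set F : Set V := {x | ∀ h ∈ L, h x = x} with hF
  have hballF : ∀ x : V, Γ.dist o x ≤ r₁ → x ∈ F := by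
    intro x hx h hh
    exact hh.2 x hx
  have hSF : ∀ s ∈ S, s ∈ F := by
    intro s hs
    exact hballF s (le_trans (Finset.le_sup (f := fun s => Γ.dist o s) hs) (le_max_left _ _))
  -- the preservation property
  set Pm : Equiv.Perm V → Prop := fun p => ∀ x ∈ F, p x ∈ F ∧ p⁻¹ x ∈ F with hPm
  have Pm_mul : ∀ {p q : Equiv.Perm V}, Pm p → Pm q → Pm (p * q) := by
    intro p q hp hq x hx
    constructor
    · have := (hp (q x) (hq x hx).1).1
      simpa [Equiv.Perm.mul_apply] using this
    · have := (hq (p⁻¹ x) (hp x hx).2).2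
      simpa [Equiv.Perm.mul_apply] using this
  -- elements of M fixing o preserve F
  have stab_half : ∀ k ∈ M, k o = o → ∀ x ∈ F, k x ∈ F := by
    intro k hk hko x hx l hl
    have hkG : k ∈ G := hMG hk
    have hconj : k⁻¹ * l * k ∈ L := by
      constructor
      · have := hH k⁻¹ (G.inv_mem hkG) l hl.1
        simpa using this
      · intro y hy
        have hky : Γ.dist o (k y) ≤ r₁ := by
          have : Γ.dist (k o) (k y) = Γ.dist o y := hdistM k hk o y
          rw [hko] at this
          rw [this]; exact hy
        simp only [Equiv.Perm.mul_apply]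
        rw [hl.2 (k y) hky]
        exact Equiv.symm_apply_apply k y
    have hfx : (k⁻¹ * l * k) x = x := hx _ hconj
    have : k⁻¹ (l (k x)) = x := by simpa [Equiv.Perm.mul_apply] using hfx
    calc l (k x) = k (k⁻¹ (l (k x))) := (Equiv.apply_symm_apply k _).symm
      _ = k x := by rw [this]
  have stab_P : ∀ k ∈ M, k o = o → Pm k := by
    intro k hk hko x hx
    refine ⟨stab_half k hk hko x hx, stab_half k⁻¹ (M.inv_mem hk) ?_ x hx⟩
    have h : k⁻¹ (k o) = o := Equiv.symm_apply_apply k o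
    rw [hko] at h
    exact h
  -- elements commuting with L preserve F
  have cent_P : ∀ p : Equiv.Perm V, (∀ l ∈ L, l * p = p * l) → Pm p := by
    intro p hp x hx
    constructor
    · intro l hl
      have : l (p x) = p (l x) := by
        have := congrArg (fun z => (z : Equiv.Perm V) x) (hp l hl)
        simpa [Equiv.Perm.mul_apply] using this
      rw [this, hx l hl]
    · intro l hl
      have hcomm : l * p⁻¹ = p⁻¹ * l := (Commute.inv_right (hp l hl)).eq
      have : l (p⁻¹ x) = p⁻¹ (l x) := by
        have := congrArg (fun z => (z : Equiv.Perm V) x) hcomm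
        simpa [Equiv.Perm.mul_apply] using this
      rw [this, hx l hl]
  -- chosen representatives preserve F
  have tw_P : ∀ w ∈ Bd, Pm (t w) := by
    intro w hw
    refine cent_P (t w) ?_
    intro l hl
    refine hΦt w l hl.1 ?_
    intro x hx
    refine hl.2 x ?_
    calc Γ.dist o x ≤ (Φt w).sup (fun x => Γ.dist o x) :=
          Finset.le_sup (f := fun x => Γ.dist o x) hx
      _ ≤ Bd.sup (fun w => (Φt w).sup (fun x => Γ.dist o x)) :=
          Finset.le_sup (f := fun w => (Φt w).sup (fun x => Γ.dist o x)) hw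
      _ ≤ r₁ := le_max_right _ _
  -- elements of M moving o a distance at most D preserve F
  have PD : ∀ e ∈ M, Γ.dist o (e o) ≤ D → Pm e := by
    intro e he hde
    set w := e o with hw
    have hwBd : w ∈ Bd := (hmemBd w).mpr hde
    have htwo : t w o = w := hto w ⟨e, he, rfl⟩
    have hkM : (t w)⁻¹ * e ∈ M := M.mul_mem (M.inv_mem (htM w)) he
    have hko : ((t w)⁻¹ * e) o = o := by
      have h : (t w)⁻¹ (t w o) = o := Equiv.symm_apply_apply (t w) o
      rw [htwo] at h
      simp only [Equiv.Perm.mul_apply, ← hw]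
      exact h
    have : e = t w * ((t w)⁻¹ * e) := (mul_inv_cancel_left _ _).symm
    rw [this]
    exact Pm_mul (tw_P w hwBd) (stab_P _ hkM hko)
  -- main induction: every element of M preserves F
  have main : ∀ n : ℕ, ∀ m ∈ M, Γ.dist o (m o) ≤ n → Pm m := by
    intro n
    induction n using Nat.strong_induction_on with
    | _ n IH =>
      intro m hm hd
      by_cases hcase : Γ.dist o (m o) ≤ D
      · exact PD m hm hcase
      · push_neg at hcase
        set ℓ := Γ.dist o (m o) with hℓ
        have hℓD : D < ℓ := hcase
        obtain ⟨p, hp⟩ := (hconn.preconnected o (m o)).exists_walk_length_eq_dist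
        set i := ℓ - (D₁ + 1) with hi
        set x := p.getVert i with hx
        have hox : Γ.dist o x ≤ i := dist_getVert_le hconn p i
        have hxz : Γ.dist x (m o) ≤ D₁ + 1 := by
          have h1 : i ≤ p.length := by rw [hp]; omega
          have := dist_getVert_right hconn p h1
          rw [hp] at this
          have h2 : ℓ - i = D₁ + 1 := by omega
          rwa [h2] at this
        obtain ⟨s₁, hs₁S, m₁, hm₁, hms⟩ := hS x
        have hd1 : Γ.dist x (m₁ o) ≤ D₁ := by
          rw [← hms]
          rw [hdistM m₁ hm₁ s₁ o]
          rw [SimpleGraph.dist_comm]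
          exact Finset.le_sup (f := fun s => Γ.dist o s) hs₁S
        have hdm₁ : Γ.dist o (m₁ o) ≤ n - 1 := by
          have := hconn.dist_triangle (u := o) (v := x) (w := m₁ o)
          omega
        have hn1 : n - 1 < n := by omega
        have Pm₁ : Pm m₁ := IH (n - 1) hn1 m₁ hm₁ hdm₁
        have heo : Γ.dist o ((m₁⁻¹ * m) o) ≤ D := by
          have hcalc : Γ.dist o ((m₁⁻¹ * m) o) = Γ.dist (m₁ o) (m o) := by
            have hkey := hdistM m₁ hm₁ ((m₁⁻¹ * m) o) o
            have h5 : m₁ ((m₁⁻¹ * m) o) = m o := by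
              simp [Equiv.Perm.mul_apply]
            rw [h5] at hkey
            rw [SimpleGraph.dist_comm, ← hkey, SimpleGraph.dist_comm]
          rw [hcalc]
          have htri := hconn.dist_triangle (u := m₁ o) (v := x) (w := m o)
          have hcomm : Γ.dist (m₁ o) x = Γ.dist x (m₁ o) := SimpleGraph.dist_comm
          omega
        have Pe : Pm (m₁⁻¹ * m) := PD _ (M.mul_mem (M.inv_mem hm₁) hm) heo
        have hsplit : m = m₁ * (m₁⁻¹ * m) := (mul_inv_cancel_left _ _).symm
        rw [hsplit]
        exact Pm_mul Pm₁ Pe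
  have hall : ∀ m ∈ M, Pm m := fun m hm => main (Γ.dist o (m o)) m hm le_rfl
  -- all of V is fixed by L
  have hVF : ∀ v : V, v ∈ F := by
    intro v
    obtain ⟨s, hsS, m, hm, hmv⟩ := hS v
    rw [← hmv]
    exact (hall m hm s (hSF s hsS)).1
  -- contradiction with a nontrivial element of the fixator
  obtain ⟨h, hhH, hh1, hhfix⟩ := hfix (ball_finite hconn hlf o r₁).toFinset
  have hhL : h ∈ L := by
    refine ⟨hhH, fun x hx => hhfix x ?_⟩
    simp [Set.Finite.mem_toFinset]
    exact hx
  obtain ⟨x, hxne⟩ : ∃ x : V, h x ≠ x := by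
    by_contra hcon
    push_neg at hcon
    exact hh1 (Equiv.ext fun x => by simpa using hcon x)
  exact hxne (hVF x h hhL)

end Aux

/-- Let `Γ` be a connected locally finite graph and `G ≤ Aut(Γ)` with an infinite
point stabiliser.  If every nontrivial normal subgroup of `G` has only finitely many
orbits on `VΓ`, then the quasi-centre of every normal subgroup `N ⊴ G` is trivial. -/
theorem stmt13 {V : Type*} (Γ : SimpleGraph V) (hconn : Γ.Connected)
    (hlf : ∀ v : V, (Γ.neighborSet v).Finite)
    (G : Subgroup (Equiv.Perm V)) (hG : G ≤ autSub Γ)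
    (hstab : ∃ v : V, {g : Equiv.Perm V | g ∈ G ∧ g v = v}.Infinite)
    (horb : ∀ N : Subgroup (Equiv.Perm V), N ≤ G →
      (∀ g ∈ G, ∀ n ∈ N, g * n * g⁻¹ ∈ N) → N ≠ ⊥ →
      ∃ S : Finset V, ∀ v : V, ∃ s ∈ S, ∃ n ∈ N, n s = v) :
    ∀ N : Subgroup (Equiv.Perm V), N ≤ G →
      (∀ g ∈ G, ∀ n ∈ N, g * n * g⁻¹ ∈ N) →
      QZset N = {(1 : Equiv.Perm V)} := by
  intro N hNG hNnorm
  classical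
  refine Set.eq_singleton_iff_unique_mem.mpr ⟨⟨N.one_mem, ∅, fun h _ _ => by
    rw [mul_one, one_mul]⟩, ?_⟩
  intro g hgQZ
  by_contra hg1
  -- N is nontrivial
  have hNbot : N ≠ ⊥ := by
    intro hbot
    rw [hbot] at hgQZ
    exact hg1 (Subgroup.mem_bot.mp hgQZ.1)
  -- the quasi-centre as a subgroup
  set Msub : Subgroup (Equiv.Perm V) :=
    { carrier := QZset N
      one_mem' := ⟨N.one_mem, ∅, fun h _ _ => by rw [mul_one, one_mul]⟩
      mul_mem' := by
        rintro a b ⟨haN, Φa, ha⟩ ⟨hbN, Φb, hb⟩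
        refine ⟨N.mul_mem haN hbN, Φa ∪ Φb, ?_⟩
        intro h hh hfx
        have h1 := ha h hh (fun x hx => hfx x (Finset.mem_union_left _ hx))
        have h2 := hb h hh (fun x hx => hfx x (Finset.mem_union_right _ hx))
        rw [← mul_assoc, h1, mul_assoc, h2, mul_assoc]
      inv_mem' := by
        rintro a ⟨haN, Φa, ha⟩
        refine ⟨N.inv_mem haN, Φa, ?_⟩
        intro h hh hfx
        exact (Commute.inv_right (ha h hh hfx)).eq } with hMsub
  have hMmem : ∀ y : Equiv.Perm V, y ∈ Msub ↔ y ∈ QZset N := fun y => Iff.rfl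
  have hMN : Msub ≤ N := fun y hy => ((hMmem y).mp hy).1
  have hMG : Msub ≤ G := le_trans hMN hNG
  -- Msub is normalised by G
  have hMnorm : ∀ x ∈ G, ∀ m ∈ Msub, x * m * x⁻¹ ∈ Msub := by
    intro x hx m hm
    obtain ⟨hmN, Φ, hΦ⟩ := (hMmem m).mp hm
    refine (hMmem _).mpr ⟨hNnorm x hx m hmN, Φ.image (fun y => x y), ?_⟩
    intro h hh hfx
    have hconjN : x⁻¹ * h * x ∈ N := by
      have := hNnorm x⁻¹ (G.inv_mem hx) h hh
      simpa using this
    have hconjfix : ∀ y ∈ Φ, (x⁻¹ * h * x) y = y := by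
      intro y hy
      have hxy : h (x y) = x y := hfx (x y) (Finset.mem_image_of_mem _ hy)
      simp only [Equiv.Perm.mul_apply]
      rw [hxy]
      exact Equiv.symm_apply_apply x y
    have hcomm := hΦ (x⁻¹ * h * x) hconjN hconjfix
    -- (x⁻¹ h x) m = m (x⁻¹ h x)  ⟹  h (x m x⁻¹) = (x m x⁻¹) h
    have := congrArg (fun z => x * z * x⁻¹) hcomm
    calc h * (x * m * x⁻¹) = x * (x⁻¹ * h * x * m) * x⁻¹ := by group
      _ = x * (m * (x⁻¹ * h * x)) * x⁻¹ := by rw [hcomm]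
      _ = x * m * x⁻¹ * h := by group
  have hMbot : Msub ≠ ⊥ := by
    intro hbot
    have : g ∈ Msub := (hMmem g).mpr hgQZ
    rw [hbot] at this
    exact hg1 (Subgroup.mem_bot.mp this)
  -- dichotomy
  by_cases hB : ∀ n ∈ N, ∃ Φ : Finset V, ∀ u ∈ G, (∀ y ∈ Φ, u y = y) → u * n = n * u
  · -- every element of N is centralised by the fixator in G of a finite set
    obtain ⟨S, hS⟩ := horb N hNG hNnorm hNbot
    exact lemmaX hconn hlf G G N hG
      (fun x hx h hh => G.mul_mem (G.mul_mem hx hh) (G.inv_mem hx)) hNG S hS hB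
      (fixator_ne_one hconn hlf G hG hstab)
  · -- some element of N is "non-quasi-central" relative to G
    push_neg at hB
    obtain ⟨n₀, hn₀N, hn₀⟩ := hB
    -- then N contains nontrivial elements fixing any finite set
    have hfixN : ∀ Ψ : Finset V, ∃ c ∈ N, c ≠ 1 ∧ ∀ x ∈ Ψ, c x = x := by
      intro Ψ
      obtain ⟨u, huG, hufix, hucomm⟩ := hn₀ (Ψ ∪ Ψ.image (fun y => n₀ y))
      refine ⟨u * n₀⁻¹ * u⁻¹ * n₀, ?_, ?_, ?_⟩
      · have h1 : u * n₀⁻¹ * u⁻¹ ∈ N := hNnorm u huG n₀⁻¹ (N.inv_mem hn₀N)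
        exact N.mul_mem h1 hn₀N
      · intro hc
        apply hucomm
        have h1 : u * n₀⁻¹ * u⁻¹ = n₀⁻¹ := by
          have := congrArg (fun z => z * n₀⁻¹) hc
          calc u * n₀⁻¹ * u⁻¹ = u * n₀⁻¹ * u⁻¹ * n₀ * n₀⁻¹ := by group
            _ = n₀⁻¹ := by rw [hc]; group
        have h2 : Commute u n₀⁻¹ := by
          unfold Commute SemiconjBy
          calc u * n₀⁻¹ = u * n₀⁻¹ * u⁻¹ * u := by group
            _ = n₀⁻¹ * u := by rw [h1]
        have h3 := h2.inv_right
        rw [inv_inv] at h3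
        exact h3.eq
      · intro x hx
        have hn₀x : u (n₀ x) = n₀ x := by
          refine hufix (n₀ x) ?_
          exact Finset.mem_union_right _ (Finset.mem_image_of_mem _ hx)
        have hux : u x = x := hufix x (Finset.mem_union_left _ hx)
        simp only [Equiv.Perm.mul_apply]
        have h1 : u⁻¹ (n₀ x) = n₀ x := by
          conv_lhs => rw [← hn₀x]
          exact Equiv.symm_apply_apply u (n₀ x)
        rw [h1, show n₀⁻¹ (n₀ x) = x from Equiv.symm_apply_apply n₀ x, hux]
    obtain ⟨S, hS⟩ := horb Msub hMG hMnorm hMbot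
    exact lemmaX hconn hlf G N Msub hG hNnorm hMG S hS
      (fun m hm => ((hMmem m).mp hm).2) hfixN
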